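/- Let A ⊆ {0,1}^n be θ-convex and θ-connected for some θ ≥ 2. Then A is the set of points of a subcube of {0,1}^n: there is a partial assignment (a term, i.e., a set of fixed coordinates with fixed values) such that A = {x ∈ {0,1}^n : x agrees with the partial assignment}. In particular, A is n-convex. -/
import Mathlib

/-- `A ⊆ {0,1}^n` is θ-convex w.r.t. the Hamming distance. -/
def HConvex {n : ℕ} (θ : ℕ) (A : Set (Fin n → Bool)) : Prop :=
  ∀ x ∈ A, ∀ y ∈ A, hammingDist x y ≤ θ →
    ∀ z, hammingDist x z + hammingDist z y = hammingDist x y → z ∈ A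

/-- `a` and `b` are θ-connected w.r.t. `A` in the Hamming cube. -/
def HConn {n : ℕ} (θ : ℕ) (A : Set (Fin n → Bool)) (a b : Fin n → Bool) : Prop :=
  ∃ (r : ℕ) (p : ℕ → (Fin n → Bool)), p 0 = a ∧ p r = b ∧ (∀ i ≤ r, p i ∈ A) ∧
    ∀ i < r, hammingDist (p i) (p (i + 1)) ≤ θ

namespace SubcubeAux

variable {n : ℕ}

/-- The set of coordinates where `x` and `y` differ. -/
def Dset (x y : Fin n → Bool) : Finset (Fin n) := Finset.univ.filter fun i => x i ≠ y i

lemma hd_eq (x y : Fin n → Bool) : hammingDist x y = (Dset x y).card := rfl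

lemma mem_Dset {x y : Fin n → Bool} {i : Fin n} : i ∈ Dset x y ↔ x i ≠ y i := by
  simp [Dset]

lemma bool_flip {a b : Bool} (h : a ≠ b) : b = !a := by
  cases a <;> cases b <;> simp_all

/-- L2: points of the interval lie on a geodesic. -/
lemma geodesic_of_between {x y z : Fin n → Bool} (h : ∀ i, z i = x i ∨ z i = y i) :
    hammingDist x z + hammingDist z y = hammingDist x y := by
  have disj : Disjoint (Dset x z) (Dset z y) := by
    rw [Finset.disjoint_left]
    intro i h1 h2
    rw [mem_Dset] at h1 h2
    rcases h i with h' | h' <;> simp_all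
  have hun : Dset x z ∪ Dset z y = Dset x y := by
    ext i
    simp only [Finset.mem_union, mem_Dset]
    rcases h i with h' | h' <;> rw [h'] <;> simp
  rw [hd_eq, hd_eq, hd_eq, ← hun, Finset.card_union_of_disjoint disj]

/-- L1: geodesic points lie in the interval. -/
lemma between_of_geodesic {x y z : Fin n → Bool}
    (h : hammingDist x z + hammingDist z y = hammingDist x y) :
    ∀ i, x i = y i → z i = x i := by
  have hsub : Dset x y ⊆ Dset x z ∪ Dset z y := by
    intro i hi
    rw [mem_Dset] at hi
    simp only [Finset.mem_union, mem_Dset]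
    by_cases hxz : x i = z i
    · exact Or.inr (fun hzy => hi (hxz.trans hzy))
    · exact Or.inl hxz
  have key : Dset x y = Dset x z ∪ Dset z y := by
    refine Finset.eq_of_subset_of_card_le hsub ?_
    calc (Dset x z ∪ Dset z y).card ≤ (Dset x z).card + (Dset z y).card :=
          Finset.card_union_le _ _
      _ = (Dset x y).card := by rw [← hd_eq, ← hd_eq, ← hd_eq]; exact h
  intro i hxy
  by_contra hzi
  have : i ∈ Dset x y := by
    rw [key]
    exact Finset.mem_union_left _ (mem_Dset.mpr (fun hh => hzi hh.symm))
  exact (mem_Dset.mp this) hxy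

lemma hd_update_eq_one {u : Fin n → Bool} {i : Fin n} {b : Bool} (hb : u i ≠ b) :
    hammingDist u (Function.update u i b) = 1 := by
  rw [hd_eq]
  have : Dset u (Function.update u i b) = {i} := by
    ext j
    simp only [mem_Dset, Function.update_apply, Finset.mem_singleton]
    rcases eq_or_ne j i with hj | hj <;> simp [hj, hb]
  rw [this, Finset.card_singleton]

/-- L3: updating one differing coordinate strictly decreases the distance. -/
lemma dist_update_lt {x y : Fin n → Bool} {i : Fin n} (h : y i ≠ x i) :
    hammingDist (Function.update y i (x i)) x < hammingDist y x := by
  rw [hd_eq, hd_eq]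
  apply Finset.card_lt_card
  constructor
  · intro j hj
    rw [mem_Dset] at hj
    rw [Function.update_apply] at hj
    rcases eq_or_ne j i with hij | hij
    · simp [hij] at hj
    · rw [if_neg hij] at hj; exact mem_Dset.mpr hj
  · intro hcon
    have hi : i ∈ Dset y x := mem_Dset.mpr h
    have := hcon hi
    rw [mem_Dset, Function.update_apply, if_pos rfl] at this
    exact this rfl

/-- One-step relation: both endpoints in `A`, Hamming distance 1. -/
def UR (A : Set (Fin n → Bool)) (u v : Fin n → Bool) : Prop :=
  u ∈ A ∧ v ∈ A ∧ hammingDist u v = 1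

lemma hd_pos_witness {u v : Fin n → Bool} (h : hammingDist u v ≠ 0) : ∃ i, u i ≠ v i := by
  by_contra hc
  push_neg at hc
  exact h (hammingDist_eq_zero.mpr (funext hc))

variable {θ : ℕ} {A : Set (Fin n → Bool)}

lemma conn_step (hconv : HConvex θ A) :
    ∀ d (u : Fin n → Bool), u ∈ A → ∀ v ∈ A, hammingDist u v ≤ θ → hammingDist u v ≤ d →
      Relation.ReflTransGen (UR A) u v := by
  intro d
  induction d with
  | zero =>
    intro u hu v hv _ hd
    have : u = v := hammingDist_eq_zero.mp (Nat.le_zero.mp hd)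
    exact this ▸ Relation.ReflTransGen.refl
  | succ d ih =>
    intro u hu v hv hθle hd
    rcases eq_or_ne (hammingDist u v) 0 with h0 | h0
    · have : u = v := hammingDist_eq_zero.mp h0
      exact this ▸ Relation.ReflTransGen.refl
    · obtain ⟨i, hi⟩ := hd_pos_witness h0
      set w := Function.update u i (v i) with hw
      have hbet : ∀ j, w j = u j ∨ w j = v j := by
        intro j
        rcases eq_or_ne j i with hj | hj
        · right; rw [hw, hj, Function.update_self]
        · left; rw [hw, Function.update_of_ne hj]
      have hgeo := geodesic_of_between (x := u) (y := v) hbet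
      have hwA : w ∈ A := hconv u hu v hv hθle w hgeo
      have hlt : hammingDist w v < hammingDist u v := dist_update_lt hi
      have h1 : hammingDist u w = 1 := hd_update_eq_one hi
      exact Relation.ReflTransGen.head ⟨hu, hwA, h1⟩
        (ih w hwA v hv (le_trans hlt.le hθle) (by omega))

lemma conn_all (hconv : HConvex θ A) (hconn : ∀ a ∈ A, ∀ b ∈ A, HConn θ A a b) :
    ∀ a ∈ A, ∀ b ∈ A, Relation.ReflTransGen (UR A) a b := by
  have key : ∀ (r : ℕ) (p : ℕ → (Fin n → Bool)), (∀ i ≤ r, p i ∈ A) →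
      (∀ i < r, hammingDist (p i) (p (i + 1)) ≤ θ) →
      Relation.ReflTransGen (UR A) (p 0) (p r) := by
    intro r
    induction r with
    | zero => intro p _ _; exact Relation.ReflTransGen.refl
    | succ r ih =>
      intro p hpA hpd
      refine Relation.ReflTransGen.trans
        (ih p (fun i hi => hpA i (by omega)) (fun i hi => hpd i (by omega))) ?_
      exact conn_step hconv (hammingDist (p r) (p (r + 1))) (p r) (hpA r (by omega))
        (p (r + 1)) (hpA (r + 1) le_rfl) (hpd r (by omega)) le_rfl
  intro a ha b hb
  obtain ⟨r, p, hp0, hpr, hpA, hpd⟩ := hconn a ha b hb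
  subst hp0 hpr
  exact key r p hpA hpd

/-- Flip coordinate `i`. -/
def flipC (i : Fin n) (x : Fin n → Bool) : Fin n → Bool := Function.update x i (!x i)

lemma flip_flip (i : Fin n) (x : Fin n → Bool) : flipC i (flipC i x) = x := by
  funext j
  rcases eq_or_ne j i with hj | hj
  · subst hj
    simp [flipC]
  · simp [flipC, Function.update_of_ne hj]

lemma step_flip {u v : Fin n → Bool} {i : Fin n} (h1 : hammingDist u v = 1)
    (hi : u i ≠ v i) : v = flipC i u := by
  have hset : Dset u v = {i} := by
    obtain ⟨a, ha⟩ := Finset.card_eq_one.mp (by rw [← hd_eq]; exact h1)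
    have : i ∈ Dset u v := mem_Dset.mpr hi
    rw [ha] at this ⊢
    rw [Finset.mem_singleton] at this
    rw [this]
  funext j
  rcases eq_or_ne j i with hj | hj
  · subst hj
    simp only [flipC]; rw [Function.update_self]
    exact bool_flip hi
  · have : j ∉ Dset u v := by rw [hset, Finset.mem_singleton]; exact hj
    rw [mem_Dset, not_ne_iff] at this
    simp only [flipC]; rw [Function.update_of_ne hj]
    exact this.symm

lemma flip_prop (hθ : 2 ≤ θ) (hconv : HConvex θ A) {p q : Fin n → Bool} {i : Fin n}
    (hp : p ∈ A) (hfp : flipC i p ∈ A) (hq : q ∈ A) (hd : hammingDist p q = 1) :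
    flipC i q ∈ A := by
  rcases eq_or_ne (p i) (q i) with hpq | hpq
  · -- step doesn't touch coordinate i; use convexity on (flipC i p, q)
    have hdle : hammingDist (flipC i p) q ≤ θ := by
      have h1 : hammingDist (flipC i p) p = 1 := by
        rw [hammingDist_comm]
        exact hd_update_eq_one (by simp)
      calc hammingDist (flipC i p) q ≤ hammingDist (flipC i p) p + hammingDist p q :=
            hammingDist_triangle _ _ _
        _ ≤ θ := by omega
    have hbet : ∀ j, flipC i q j = flipC i p j ∨ flipC i q j = q j := by
      intro j
      rcases eq_or_ne j i with hj | hj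
      · subst hj
        left
        simp [flipC, hpq]
      · right
        simp [flipC, Function.update_of_ne hj]
    exact hconv (flipC i p) hfp q hq hdle (flipC i q) (geodesic_of_between hbet)
  · -- the step flips coordinate i itself
    have hv : q = flipC i p := step_flip hd hpq
    rw [hv, flip_flip]
    exact hp

lemma flip_closed (hθ : 2 ≤ θ) (hconv : HConvex θ A)
    (hconn : ∀ a ∈ A, ∀ b ∈ A, HConn θ A a b) {i : Fin n}
    (hfree : ∃ a ∈ A, ∃ b ∈ A, a i ≠ b i) :
    ∀ x ∈ A, flipC i x ∈ A := by
  obtain ⟨a, ha, b, hb, hab⟩ := hfree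
  -- Step 1: find u with u ∈ A and flipC i u ∈ A
  have aux : ∀ {c d : Fin n → Bool}, Relation.ReflTransGen (UR A) c d →
      c i ≠ d i → ∃ u ∈ A, flipC i u ∈ A := by
    intro c d h
    induction h with
    | refl => intro h'; exact absurd rfl h'
    | @tail e f h1 h2 ih =>
      intro hcf
      rcases eq_or_ne (c i) (e i) with hce | hce
      · have hef : e i ≠ f i := fun h => hcf (hce.trans h)
        refine ⟨e, h2.1, ?_⟩
        rw [← step_flip h2.2.2 hef]
        exact h2.2.1
      · exact ih hce
  obtain ⟨u, hu, hfu⟩ := aux (conn_all hconv hconn a ha b hb) hab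
  -- Step 2: propagate along unit paths
  have aux2 : ∀ {x : Fin n → Bool}, Relation.ReflTransGen (UR A) u x → flipC i x ∈ A := by
    intro x h
    induction h with
    | refl => exact hfu
    | @tail e f h1 h2 ih =>
      exact flip_prop hθ hconv h2.1 ih h2.2.1 h2.2.2
  intro x hx
  exact aux2 (conn_all hconv hconn u hu x hx)

end SubcubeAux

open SubcubeAux in
theorem subcube_of_theta_convex_connected {n : ℕ} (θ : ℕ) (hθ : 2 ≤ θ)
    (A : Set (Fin n → Bool)) (hne : A.Nonempty) (hconv : HConvex θ A)
    (hconn : ∀ a ∈ A, ∀ b ∈ A, HConn θ A a b) :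
    (∃ (S : Set (Fin n)) (σ : Fin n → Bool),
        A = {x : Fin n → Bool | ∀ i ∈ S, x i = σ i}) ∧
    HConvex n A := by
  obtain ⟨a₀, ha₀⟩ := hne
  set S : Set (Fin n) := {i | ∀ x ∈ A, x i = a₀ i} with hS
  have hmain : A = {x : Fin n → Bool | ∀ i ∈ S, x i = a₀ i} := by
    apply Set.Subset.antisymm
    · intro x hx i hi
      exact hi x hx
    · intro x hx
      simp only [Set.mem_setOf_eq] at hx
      -- strong induction on the distance from a point of A to x
      have claim : ∀ d (y : Fin n → Bool), y ∈ A → hammingDist y x ≤ d → x ∈ A := by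
        intro d
        induction d with
        | zero =>
          intro y hy hd
          have : y = x := hammingDist_eq_zero.mp (Nat.le_zero.mp hd)
          exact this ▸ hy
        | succ d ih =>
          intro y hy hd
          rcases eq_or_ne (hammingDist y x) 0 with h0 | h0
          · have : y = x := hammingDist_eq_zero.mp h0
            exact this ▸ hy
          · obtain ⟨i, hi⟩ := hd_pos_witness h0
            have hiS : i ∉ S := by
              intro hiS
              exact hi ((hiS y hy).trans (hx i hiS).symm)
            have hfree : ∃ a ∈ A, ∃ b ∈ A, a i ≠ b i := by
              simp only [hS, Set.mem_setOf_eq] at hiS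
              push_neg at hiS
              obtain ⟨z, hz, hzne⟩ := hiS
              exact ⟨z, hz, a₀, ha₀, hzne⟩
            have hfy : flipC i y ∈ A := flip_closed hθ hconv hconn hfree y hy
            have heq : flipC i y = Function.update y i (x i) := by
              have hxi : x i = !y i := bool_flip hi
              show Function.update y i (!y i) = Function.update y i (x i)
              rw [hxi]
            have hlt : hammingDist (flipC i y) x < hammingDist y x := by
              rw [heq]
              exact dist_update_lt hi
            exact ih (flipC i y) hfy (by omega)
      exact claim (hammingDist a₀ x) a₀ ha₀ le_rfl
  refine ⟨⟨S, a₀, hmain⟩, ?_⟩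
  intro x hx y hy _ z hz
  rw [hmain] at hx hy ⊢
  intro i hi
  have hxy : x i = y i := (hx i hi).trans (hy i hi).symm
  have := between_of_geodesic hz i hxy
  rw [this]
  exact hx i hi
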